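/- There exists a Markov-computable function F : 𝕊 → O(𝔹) that is not K-computable (indeed not even continuous/monotone): F(⊥) = 𝔹 and F(⊤) = 𝔹 \ {T}, where T(n) is the halting time of φ_n(n) if it halts and 0 otherwise, and 𝔹 \ {T} is an effective open subset of Baire space. -/

import Mathlib

open Classical

/-- The standard enumeration of partial computable functions. -/
noncomputable def phi (e : ℕ) : ℕ →. ℕ := (Denumerable.ofNat Nat.Partrec.Code e).eval

/-- The halting-time function: `T n` is the halting time of `φ_n(n)` (measured by `evaln`),
and `0` if `φ_n(n)` diverges. -/
noncomputable def T : ℕ → ℕ := fun n =>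
  if h : ∃ s, (Nat.Partrec.Code.evaln s (Denumerable.ofNat Nat.Partrec.Code n) n).isSome
  then Nat.find h else 0

/-- The cylinder of elements of Baire space extending the finite sequence `u`. -/
def cylN (u : List ℕ) : Set (ℕ → ℕ) := {f | ∀ i : Fin u.length, f i.1 = u.get i}

/-- The finite prefix of length `m` of the oracle `f`. -/
def pref (f : ℕ → ℕ) (m : ℕ) : List ℕ := (List.range m).map f

/-- The finite prefix of length `m` of a boolean oracle. -/
def prefB (f : ℕ → Bool) (m : ℕ) : List Bool := (List.range m).map f

/-- `g` is a name of the open set `U ⊆ 𝔹` in the admissible representation of `O(𝔹)`: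
`g` enumerates basic cylinders (`0` is padding, `encode u + 1` codes the cylinder `[u]`)
exhausting `U`. -/
def OBName (g : ℕ → ℕ) (U : Set (ℕ → ℕ)) : Prop :=
  U = {f | ∃ (n : ℕ) (u : List ℕ), g n = Encodable.encode u + 1 ∧ f ∈ cylN u}

/-- The admissible numbering of Sierpiński space `𝕊` (`⊥ = false`, `⊤ = true`):
`ν_𝕊(e) = ⊤` iff `φ_e(e)↓`. -/
noncomputable def nuS (e : ℕ) : Bool := @decide ((phi e e).Dom) (Classical.propDecidable _)

/-- `f` is a Type-2 name of the point `s ∈ 𝕊`. -/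
def SierpName (f : ℕ → ℕ) (s : Bool) : Prop := (s = true ↔ ∃ n, f n ≠ 0)

/-- Kolmogorov complexity of a point of `𝕊`: least binary length of a Markov-name. -/
noncomputable def KSierp (s : Bool) : ℕ := sInf (Nat.size '' {e | nuS e = s})

/-! `𝔹 \ {T}` is effectively open: `f ≠ T` is witnessed by an `i` with `f i ≠ T i`, and
`v ≠ T i` is decidable for `v ≠ 0` and semidecidable (wait for `φ_i(i)` to halt) for `v = 0`.
A name of `F (ν_𝕊 e)` enumerates these cylinders together with, for every stage `s` at which
`φ_e(e)` has not halted yet, the cylinder of length `e + 1` around the stage-`s` approximation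
of `T`; those cylinders contain `T` exactly when `φ_e(e)` never halts.

Conversely, a realizer acting on Type-2 names is continuous: whatever it outputs for `F ⊥`
after reading the prefix `0^m` of the name `0` of `⊥` it also outputs for the name `0^m 1 0 …`
of `⊤`, which would force `F ⊥ ⊆ F ⊤`; but `T ∈ F ⊥ = 𝔹` and `T ∉ F ⊤`. -/

open Nat.Partrec (Code)

def halts (s n : ℕ) : Bool := (Code.evaln s (Denumerable.ofNat Code n) n).isSome

lemma halts_mono {s t n : ℕ} (hst : s ≤ t) (hs : halts s n = true) : halts t n = true := by
  obtain ⟨x, hx⟩ := Option.isSome_iff_exists.1 hs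
  exact Option.isSome_iff_exists.2 ⟨x, Code.evaln_mono hst hx⟩

lemma halts_iff {s n : ℕ} : halts s n = true ↔ T n ≠ 0 ∧ T n ≤ s := by
  by_cases h : ∃ t, halts t n = true
  · have hT : T n = Nat.find h := dif_pos h
    have hT0 : Nat.find h ≠ 0 := fun h0 => by
      have h0' := Nat.find_spec h
      rw [h0] at h0'
      simp [halts, Code.evaln] at h0'
    rw [hT, Nat.find_le_iff]
    exact ⟨fun hs => ⟨hT0, s, le_rfl, hs⟩, fun ⟨_, t, hts, ht⟩ => halts_mono hts ht⟩
  · have hT : T n = 0 := dif_neg h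
    simp only [hT, ne_eq, not_true_eq_false, false_and, iff_false]
    exact fun hs => h ⟨s, hs⟩

lemma phi_self_dom_iff (n : ℕ) : (phi n n).Dom ↔ T n ≠ 0 := by
  rw [Part.dom_iff_mem]
  constructor
  · rintro ⟨x, hx⟩
    obtain ⟨s, hs⟩ := Code.evaln_complete.1 hx
    exact (halts_iff.1 (Option.isSome_iff_exists.2 ⟨x, hs⟩)).1
  · intro hT
    obtain ⟨x, hx⟩ := Option.isSome_iff_exists.1 (halts_iff.2 ⟨hT, le_rfl⟩)
    exact ⟨x, Code.evaln_complete.2 ⟨_, hx⟩⟩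

lemma nuS_eq_true_iff (n : ℕ) : nuS n = true ↔ T n ≠ 0 := by
  rw [nuS, decide_eq_true_iff, phi_self_dom_iff]

def haltsExactlyAt (t n : ℕ) : Bool := halts t n && !halts (t - 1) n

lemma haltsExactlyAt_iff {t n : ℕ} : haltsExactlyAt t n = true ↔ t ≠ 0 ∧ T n = t := by
  simp only [haltsExactlyAt, Bool.and_eq_true, Bool.not_eq_true',
    ← Bool.not_eq_true, halts_iff]
  omega

def approxT (s n : ℕ) : ℕ := Nat.findGreatest (fun t => haltsExactlyAt t n = true) s

lemma approxT_eq (s n : ℕ) : approxT s n = if T n ≤ s then T n else 0 := by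
  simp only [approxT, Nat.findGreatest_eq_iff, haltsExactlyAt_iff]
  split_ifs <;> exact ⟨by omega, by omega, fun _ _ _ => by omega⟩

def refutes (s i v : ℕ) : Bool := !haltsExactlyAt v i && (v != 0 || halts s i)

lemma refutes_iff {s i v : ℕ} : refutes s i v = true ↔ v ≠ T i ∧ (v = 0 → T i ≤ s) := by
  simp only [refutes, Bool.and_eq_true, Bool.not_eq_true', Bool.or_eq_true, bne_iff_ne,
    halts_iff, ← Bool.not_eq_true, haltsExactlyAt_iff]
  omega

lemma pref_length (f : ℕ → ℕ) (m : ℕ) : (pref f m).length = m := by simp [pref]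

lemma pref_succ (f : ℕ → ℕ) (m : ℕ) : pref f (m + 1) = pref f m ++ [f m] := by
  simp [pref, List.range_succ]

lemma pref_eq_pref_iff {f g : ℕ → ℕ} {m : ℕ} : pref f m = pref g m ↔ ∀ i < m, f i = g i := by
  simp [pref, List.map_inj_left]

lemma mem_cylN_iff {f : ℕ → ℕ} {u : List ℕ} : f ∈ cylN u ↔ pref f u.length = u := by
  simp [cylN, pref, List.ext_get_iff, Fin.forall_iff]

lemma mem_cylN_pref (f : ℕ → ℕ) (m : ℕ) : f ∈ cylN (pref f m) := by
  rw [mem_cylN_iff, pref_length]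

lemma apply_eq_of_mem_cylN_append {f : ℕ → ℕ} {w : List ℕ} {v : ℕ} (hf : f ∈ cylN (w ++ [v])) :
    f w.length = v := by
  rw [mem_cylN_iff, List.length_append, List.length_singleton, pref_succ] at hf
  simpa using (List.append_inj hf (pref_length f _)).2

lemma exists_refutes_mem_cylN_iff {f : ℕ → ℕ} :
    (∃ s w v, refutes s w.length v = true ∧ f ∈ cylN (w ++ [v])) ↔ f ≠ T := by
  constructor
  · rintro ⟨s, w, v, hr, hf⟩ rfl
    exact (refutes_iff.1 hr).1 (apply_eq_of_mem_cylN_append hf).symm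
  · intro hf
    obtain ⟨i, hi⟩ := Function.ne_iff.1 hf
    refine ⟨T i, pref f i, f i, ?_, ?_⟩
    · rw [pref_length]
      exact refutes_iff.2 ⟨hi, fun _ => le_rfl⟩
    · rw [← pref_succ]
      exact mem_cylN_pref f (i + 1)

lemma exists_not_halts_mem_cylN_approxT_iff {n : ℕ} :
    (∃ s, halts s n = false ∧ T ∈ cylN (pref (approxT s) (n + 1))) ↔ T n = 0 := by
  simp only [mem_cylN_iff, pref_length, pref_eq_pref_iff, approxT_eq, ← Bool.not_eq_true,
    halts_iff]
  constructor
  · rintro ⟨s, hs, hT⟩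
    have := hT n (Nat.lt_succ_self n)
    split_ifs at this <;> omega
  · intro hT
    refine ⟨(Finset.range (n + 1)).sup T, by omega, fun i hi => ?_⟩
    rw [if_pos (Finset.le_sup (Finset.mem_range.2 hi))]

/-- The `none` cylinders cover `T` exactly when `φ_n(n)` never halts: at a stage `s` at which
`φ_n(n)` has not halted, `approxT s n = 0`, which differs from `T n` if it halts later. -/
def coverCylinder (n : ℕ) : ℕ × Option (List ℕ × ℕ) → Option (List ℕ)
  | (s, none) => bif halts s n then none else some (pref (approxT s) (n + 1))
  | (s, some (w, v)) => bif refutes s w.length v then some (w ++ [v]) else none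

lemma exists_coverCylinder_iff {n : ℕ} {f : ℕ → ℕ} :
    (∃ a u, coverCylinder n a = some u ∧ f ∈ cylN u) ↔ (T n ≠ 0 → f ≠ T) := by
  constructor
  · rintro ⟨⟨s, _ | ⟨w, v⟩⟩, u, hu, hf⟩ hTn
    · rintro rfl
      cases hs : halts s n <;> simp only [coverCylinder, hs, cond_true, cond_false,
        reduceCtorEq, Option.some.injEq] at hu
      subst hu
      exact hTn (exists_not_halts_mem_cylN_approxT_iff.1 ⟨s, hs, hf⟩)
    · cases hr : refutes s w.length v <;> simp only [coverCylinder, hr, cond_true, cond_false,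
        reduceCtorEq, Option.some.injEq] at hu
      subst hu
      exact exists_refutes_mem_cylN_iff.1 ⟨s, w, v, hr, hf⟩
  · intro h
    by_cases hf : f = T
    · subst hf
      obtain ⟨s, hs, hT⟩ := exists_not_halts_mem_cylN_approxT_iff.2 (not_not.1 fun hTn => h hTn rfl)
      exact ⟨(s, none), _, by simp [coverCylinder, hs], hT⟩
    · obtain ⟨s, w, v, hr, hf⟩ := exists_refutes_mem_cylN_iff.2 hf
      exact ⟨(s, some (w, v)), _, by simp [coverCylinder, hr], hf⟩

lemma oBName_encode_comp_ofNat {α : Type*} [Denumerable α] (c : α → Option (List ℕ)) :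
    OBName (fun n => Encodable.encode (c (Denumerable.ofNat α n)))
      {f | ∃ a u, c a = some u ∧ f ∈ cylN u} := by
  ext f
  constructor
  · rintro ⟨a, u, hc, hf⟩
    exact ⟨Encodable.encode a, u, by simp [hc], hf⟩
  · rintro ⟨n, u, hc, hf⟩
    exact ⟨_, u, Encodable.encode_injective (hc.trans (Encodable.encode_some u).symm), hf⟩

lemma halts_primrec : Primrec₂ halts :=
  (Primrec.option_isSome.comp (Code.primrec_evaln.comp
    ((Primrec.fst.pair ((Primrec.ofNat Code).comp Primrec.snd)).pair Primrec.snd))).to₂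

lemma haltsExactlyAt_primrec : Primrec₂ haltsExactlyAt :=
  Primrec.and.comp₂ halts_primrec
    (Primrec.not.comp₂ (halts_primrec.comp₂ (Primrec.pred.comp₂ Primrec₂.left) Primrec₂.right))

lemma approxT_primrec : Primrec₂ approxT := by
  have hp : PrimrecRel fun (x : ℕ × ℕ) t => haltsExactlyAt t x.2 = true :=
    Primrec₂.primrecRel (by
      simpa using haltsExactlyAt_primrec.comp₂ Primrec₂.right (Primrec.snd.comp₂ Primrec₂.left))
  exact (Primrec.nat_findGreatest Primrec.fst hp).to₂

lemma refutes_primrec : Primrec fun x : ℕ × ℕ × ℕ => refutes x.1 x.2.1 x.2.2 := by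
  have hs : Primrec fun x : ℕ × ℕ × ℕ => x.1 := Primrec.fst
  have hi : Primrec fun x : ℕ × ℕ × ℕ => x.2.1 := Primrec.fst.comp Primrec.snd
  have hv : Primrec fun x : ℕ × ℕ × ℕ => x.2.2 := Primrec.snd.comp Primrec.snd
  exact Primrec.and.comp (Primrec.not.comp (haltsExactlyAt_primrec.comp hv hi))
    (Primrec.or.comp (Primrec.not.comp (Primrec.beq.comp hv (Primrec.const 0)))
      (halts_primrec.comp hs hi))

lemma coverCylinder_primrec : Primrec₂ coverCylinder := by
  have hn : Primrec fun p : ℕ × ℕ × Option (List ℕ × ℕ) => p.1 := Primrec.fst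
  have hs : Primrec fun p : ℕ × ℕ × Option (List ℕ × ℕ) => p.2.1 := Primrec.fst.comp Primrec.snd
  have hpref : Primrec fun p : ℕ × ℕ × Option (List ℕ × ℕ) => pref (approxT p.2.1) (p.1 + 1) :=
    Primrec.list_map (Primrec.list_range.comp (Primrec.succ.comp hn))
      (approxT_primrec.comp (hs.comp Primrec.fst) Primrec.snd).to₂
  have hnone : Primrec fun p : ℕ × ℕ × Option (List ℕ × ℕ) =>
      bif halts p.2.1 p.1 then none else some (pref (approxT p.2.1) (p.1 + 1)) :=
    Primrec.cond (halts_primrec.comp hs hn) (Primrec.const none)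
      (Primrec.option_some.comp hpref)
  have hsome : Primrec₂ fun (p : ℕ × ℕ × Option (List ℕ × ℕ)) (wv : List ℕ × ℕ) =>
      bif refutes p.2.1 wv.1.length wv.2 then some (wv.1 ++ [wv.2]) else none := by
    have hw : Primrec fun q : (ℕ × ℕ × Option (List ℕ × ℕ)) × (List ℕ × ℕ) => q.2.1 :=
      Primrec.fst.comp Primrec.snd
    have hv : Primrec fun q : (ℕ × ℕ × Option (List ℕ × ℕ)) × (List ℕ × ℕ) => q.2.2 :=
      Primrec.snd.comp Primrec.snd
    exact Primrec.cond
      (refutes_primrec.comp ((hs.comp Primrec.fst).pair ((Primrec.list_length.comp hw).pair hv)))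
      (Primrec.option_some.comp (Primrec.list_concat.comp hw hv)) (Primrec.const none)
  exact (Primrec.option_casesOn (Primrec.snd.comp Primrec.snd) hnone hsome).of_eq
    fun ⟨n, s, a⟩ => by cases a <;> rfl

def markovName (n k : ℕ) : ℕ :=
  Encodable.encode (coverCylinder n (Denumerable.ofNat (ℕ × Option (List ℕ × ℕ)) k))

lemma markovName_computable : Computable₂ markovName :=
  (Primrec.encode.comp (coverCylinder_primrec.comp Primrec.fst
    ((Primrec.ofNat _).comp Primrec.snd))).to₂.to_comp

lemma oBName_markovName (n : ℕ) : OBName (markovName n) {f | T n ≠ 0 → f ≠ T} := by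
  have h := oBName_encode_comp_ofNat (coverCylinder n)
  simp only [exists_coverCylinder_iff] at h
  exact h

lemma sierpName_zero : SierpName 0 false := by simp [SierpName]

lemma sierpName_single (m : ℕ) : SierpName (Pi.single m 1) true :=
  ⟨fun _ => ⟨m, by simp⟩, fun _ => rfl⟩

lemma pref_single_eq_pref_zero (m : ℕ) : pref (Pi.single m 1) m = pref 0 m :=
  pref_eq_pref_iff.2 fun _ hi => Pi.single_eq_of_ne hi.ne _

def KRealizes (M : ℕ → List ℕ → List ℕ) (F : Bool → Set (ℕ → ℕ)) : Prop :=
  ∀ (s : Bool) (f : ℕ → ℕ), SierpName f s → ∀ k, KSierp s ≤ k →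
    ∃ g : ℕ → ℕ, OBName g (F s) ∧
      (∀ m, M k (pref f m) = pref g (M k (pref f m)).length) ∧
      (∀ n, ∃ m, n ≤ (M k (pref f m)).length)

/-- A cylinder enumerated for `F ⊥` from the name `0` is already enumerated after reading a
finite prefix `0^m`, which is also a prefix of the name `0^m 1 0 0 …` of `⊤`. -/
lemma KRealizes.monotone {M : ℕ → List ℕ → List ℕ} {F : Bool → Set (ℕ → ℕ)}
    (hM : KRealizes M F) : Monotone F := by
  suffices F false ⊆ F true by
    rintro (_ | _) (_ | _) hab
    · exact le_rfl
    · exact this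
    · exact absurd hab (by decide)
    · exact le_rfl
  intro x hx
  set k := max (KSierp false) (KSierp true)
  obtain ⟨g, hg, hgM, hlen⟩ := hM false 0 sierpName_zero k (le_max_left _ _)
  obtain ⟨i, u, hgi, hxu⟩ : x ∈ {f | ∃ i u, g i = Encodable.encode u + 1 ∧ f ∈ cylN u} :=
    hg ▸ hx
  obtain ⟨m, hm⟩ := hlen (i + 1)
  obtain ⟨g', hg', hg'M, -⟩ := hM true (Pi.single m 1) (sierpName_single m) k (le_max_right _ _)
  have hg'm := hg'M m
  rw [pref_single_eq_pref_zero] at hg'm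
  have hgi' : g' i = g i := (pref_eq_pref_iff.1 ((hgM m).symm.trans hg'm) i hm).symm
  exact hg' ▸ ⟨i, u, hgi' ▸ hgi, hxu⟩

/-- There is a Markov-computable function `F : 𝕊 → O(𝔹)`, namely `F(⊥) = 𝔹` and
`F(⊤) = 𝔹 \ {T}`, which is not K-computable: no computable monotone functional maps
(`k ≥ K(s)`, a Type-2 name of `s`) to a name of `F(s)`. -/
theorem stmt15 :
    ∃ F : Bool → Set (ℕ → ℕ),
      F false = Set.univ ∧ F true = {T}ᶜ ∧
      (∃ hfun : ℕ → ℕ → ℕ, Computable₂ hfun ∧ ∀ e, OBName (hfun e) (F (nuS e))) ∧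
      ¬ ∃ M : ℕ → List ℕ → List ℕ, Computable₂ M ∧
          (∀ k l l', M k l <+: M k (l ++ l')) ∧
          ∀ (s : Bool) (f : ℕ → ℕ), SierpName f s → ∀ k, KSierp s ≤ k →
            ∃ g : ℕ → ℕ, OBName g (F s) ∧
              (∀ m, M k (pref f m) = pref g (M k (pref f m)).length) ∧
              (∀ n, ∃ m, n ≤ (M k (pref f m)).length) := by
  refine ⟨fun b => {f | b = true → f ≠ T}, by ext; simp, by ext; simp, ?_, ?_⟩
  · refine ⟨markovName, markovName_computable, fun e => ?_⟩
    simp only [nuS_eq_true_iff]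
    exact oBName_markovName e
  · rintro ⟨M, -, -, hM⟩
    have hT : T ∈ _ := KRealizes.monotone hM (Bool.false_le true) (by simp)
    simp at hT
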